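/- arXiv:2510.13611 — 2 statements merged into one kernel-verified Lean document; each statement's English description precedes it below -/
import Mathlib

section
/- There is no vector v = (a,b,c) ∈ ℤ³ with ⟨v,v⟩ = 0 and ⟨(1,1,1),v⟩ = 1; equivalently, the lattice Λ₀ contains no class F with F² = 0 and L·F = 1, so the degree-18 polarised K3 lattice Λ₀ admits no unigonal class. -/
open Matrix

/-- The Gram matrix of the lattice `Λ₀` in the basis `(H₁, H₂, H₃)`. -/
def GramLambda0 : Matrix (Fin 3) (Fin 3) ℤ := !![0, 2, 3; 2, 0, 3; 3, 3, 2]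

/-- The symmetric bilinear pairing `⟨v, w⟩ = vᵀ G w` on `ℤ³` given by the Gram matrix. -/
def lambda0Pair (v w : Fin 3 → ℤ) : ℤ := v ⬝ᵥ GramLambda0.mulVec w

/-! Completing the square: `25 ⟨v,v⟩ = (L·v + 7c)² - 25(a-b)² - 175c²` for `v = (a,b,c)`.
For a unigonal class this forces `25(a-b)² + 175c² = (1+7c)²`, which has no integral solution:
`c ≠ 0` makes the left side too large, and `c = 0` leaves `25(a-b)² = 1`. -/

theorem lambda0Pair_completed_square (v : Fin 3 → ℤ) :
    25 * (v 0 - v 1) ^ 2 + 175 * v 2 ^ 2 + 25 * lambda0Pair v v =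
      (lambda0Pair ![1, 1, 1] v + 7 * v 2) ^ 2 := by
  simp only [Fin.isValue, lambda0Pair, dotProduct, mulVec, GramLambda0, of_apply, cons_val',
    cons_val_fin_one, Fin.sum_univ_three, cons_val_zero, cons_val_one, cons_val, zero_mul,
    zero_add, add_zero, one_mul]
  ring

theorem not_sq_add_sq_eq_sq (d c : ℤ) : 25 * d ^ 2 + 175 * c ^ 2 ≠ (1 + 7 * c) ^ 2 := by
  intro h
  rcases eq_or_ne c 0 with rfl | hc
  · omega
  · have : 0 < c ^ 2 := by positivity
    nlinarith [sq_nonneg d]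

/-- The degree-18 polarised K3 lattice `Λ₀` admits no unigonal class: there is no
vector `F ∈ ℤ³` with `F² = 0` and `L·F = 1`, where `L = H₁ + H₂ + H₃ = (1,1,1)`. -/
theorem no_unigonal_class :
    ¬ ∃ v : Fin 3 → ℤ, lambda0Pair v v = 0 ∧ lambda0Pair ![1, 1, 1] v = 1 := by
  rintro ⟨v, hself, hL⟩
  have hsquare := lambda0Pair_completed_square v
  rw [hself, hL, mul_zero, add_zero] at hsquare
  exact not_sq_add_sq_eq_sq _ _ hsquare
end

section
/- There are no integers a, b, c satisfying simultaneously 2c² + 4ab + 6ac + 6bc = 0 and 5(a+b) + 8c = 1. -/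
/-!
Writing `s = a + b`, `d = a - b` and `4ab = s² - d²`, the linear relation `5s = 1 - 8c` turns
`25 F²` into `1 + 14c - 126c² - 25d²`. So `F² = 0` forces `1 + 14c - 126c² ≥ 0`, which for an
integer `c` means `c = 0`; but then `5(a + b) = 1`, impossible.
-/

theorem twentyfive_mul_form_add_sq_sub_eq {a b c : ℤ} (h : 5 * (a + b) + 8 * c = 1) :
    25 * (2 * c ^ 2 + 4 * a * b + 6 * a * c + 6 * b * c) + 25 * (a - b) ^ 2 =
      1 + 14 * c - 126 * c ^ 2 := by
  linear_combination (5 * (a + b) + 22 * c + 1) * h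

theorem Int.eq_zero_of_nonneg_one_add_mul_sub_mul_sq {p q c : ℤ} (hpq : |p| + 2 ≤ q)
    (h : 0 ≤ 1 + p * c - q * c ^ 2) : c = 0 := by
  by_contra hc
  have hc₁ : 1 ≤ |c| := Int.one_le_abs hc
  have hpc : p * c ≤ |p| * |c| := abs_mul p c ▸ le_abs_self (p * c)
  have habs_le_sq : |c| ≤ c ^ 2 := by
    rw [← sq_abs]
    nlinarith
  nlinarith [mul_le_mul_of_nonneg_right hpq (sq_nonneg c), abs_nonneg p]

/-- There are no integers `a`, `b`, `c` with `2c² + 4ab + 6ac + 6bc = 0` and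
`5(a+b) + 8c = 1`. -/
theorem no_unigonal_diophantine :
    ¬ ∃ a b c : ℤ, 2 * c ^ 2 + 4 * a * b + 6 * a * c + 6 * b * c = 0 ∧
      5 * (a + b) + 8 * c = 1 := by
  rintro ⟨a, b, c, hF, hL⟩
  have key := twentyfive_mul_form_add_sq_sub_eq hL
  rw [hF] at key
  have hc : c = 0 :=
    Int.eq_zero_of_nonneg_one_add_mul_sub_mul_sq (p := 14) (q := 126) (by norm_num)
      (key ▸ by positivity)
  subst hc
  omega
end
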